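/- Let k be an algebraically closed field, let A and C be finite-dimensional k-vector spaces with dim A = a ≥ 1 and dim C = a + b − 2 where b ≥ 2, and let W ⊆ Hom_k(A, C) be a k-linear subspace with dim W = b. Then W contains a nonzero linear map A → C that is not injective. (Equivalently: the (b−1)-dimensional projective linear subspace of P(Hom(A,C)) determined by W meets the locus of maps of rank at most a − 1.) -/

import Mathlib

/-!
Evaluation `W × A → C` is bilinear; in coordinates its `a + b - 2` components are forms of
bidegree `(1, 1)` in variables `x₁, …, x_b, y₁, …, y_a`, and a nonzero non-injective map in `W` is
a common zero with `x ≠ 0` and `y ≠ 0`. If there were none, the Nullstellensatz would put a power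
of the ideal `(xᵢ yⱼ)` inside the ideal `I` of the forms, so `I` would contain every polynomial of
bidegree `(t, t)` for large `t`. Removing one `(1, 1)`-form from an ideal raises the growth degree
of the diagonal Hilbert function `t ↦ dim (R ⧸ I)_(t,t)` by at most one, so `dim R_(t,t)` would be
`O(t ^ (a + b - 3))`, whereas it grows like `t ^ (a + b - 2)`.
-/

open Module Filter

section LinearAlgebra

variable {K V V₂ : Type*} [DivisionRing K] [AddCommGroup V] [Module K V]
  [AddCommGroup V₂] [Module K V₂]

theorem Submodule.finrank_map_add_finrank_le_of_le {N P : Submodule K V} (hNP : N ≤ P)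
    [FiniteDimensional K P] (φ : V →ₗ[K] V₂) :
    finrank K (P.map φ) + finrank K N ≤ finrank K (N.map φ) + finrank K P := by
  have : FiniteDimensional K N := Submodule.finiteDimensional_of_le hNP
  have finrank_ker (L : Submodule K V) :
      finrank K (LinearMap.ker (φ.domRestrict L)) = finrank K ↥(L ⊓ LinearMap.ker φ) := by
    rw [LinearMap.ker_domRestrict, ← Submodule.finrank_map_subtype_eq,
      Submodule.map_comap_subtype]
  have hP := (φ.domRestrict P).finrank_range_add_finrank_ker
  have hN := (φ.domRestrict N).finrank_range_add_finrank_ker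
  rw [LinearMap.range_domRestrict, finrank_ker] at hP hN
  have := Submodule.finrank_mono (inf_le_inf_right (LinearMap.ker φ) hNP)
  omega

theorem Submodule.finrank_sup_map_add_finrank_le {N P : Submodule K V} {Q : Submodule K V₂}
    {φ : V →ₗ[K] V₂} (hNP : N ≤ P) (hNQ : N.map φ ≤ Q) [FiniteDimensional K P]
    [FiniteDimensional K Q] :
    finrank K ↥(Q ⊔ P.map φ) + finrank K N ≤ finrank K Q + finrank K P := by
  have := Submodule.finrank_sup_add_finrank_inf_eq Q (P.map φ)
  have := Submodule.finrank_mono (le_inf hNQ (Submodule.map_mono hNP))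
  have := Submodule.finrank_map_add_finrank_le_of_le hNP φ
  omega

end LinearAlgebra

section Growth

variable {g h : ℕ → ℕ}

theorem le_add_sum_of_le_add (hgh : ∀ t, g (t + 1) ≤ h (t + 1) + g t) (t : ℕ) :
    g t ≤ g 0 + ∑ u ∈ Finset.range t, h (u + 1) := by
  induction t with
  | zero => simp
  | succ t ih =>
    rw [Finset.sum_range_succ]
    linarith [hgh t]

theorem exists_le_of_le_add_of_eventually_eq_zero (hgh : ∀ t, g (t + 1) ≤ h (t + 1) + g t)
    (hh : ∀ᶠ t in atTop, h t = 0) : ∃ D, ∀ t, g t ≤ D := by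
  obtain ⟨T, hT⟩ := eventually_atTop.mp hh
  refine ⟨g 0 + ∑ u ∈ Finset.range T, h (u + 1),
    fun t => (le_add_sum_of_le_add hgh t).trans ?_⟩
  gcongr 1
  refine Finset.sum_le_sum_of_ne_zero fun u _ hu => Finset.mem_range.mpr ?_
  by_contra! hTu
  exact hu (hT _ (by omega))

theorem le_mul_pow_succ_of_le_add (hgh : ∀ t, g (t + 1) ≤ h (t + 1) + g t) {D j : ℕ}
    (hh : ∀ t, h t ≤ D * (t + 1) ^ j) (t : ℕ) : g t ≤ (g 0 + D) * (t + 1) ^ (j + 1) := by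
  calc g t ≤ g 0 + ∑ u ∈ Finset.range t, h (u + 1) := le_add_sum_of_le_add hgh t
    _ ≤ g 0 + ∑ _u ∈ Finset.range t, D * (t + 1) ^ j := by
      gcongr with u hu
      have := Finset.mem_range.mp hu
      exact (hh _).trans (by gcongr; omega)
    _ ≤ (g 0 + D) * (t + 1) ^ (j + 1) := by
      rw [Finset.sum_const, Finset.card_range, smul_eq_mul, pow_succ]
      have : 1 ≤ (t + 1) ^ j := Nat.one_le_pow _ _ (by omega)
      generalize (t + 1) ^ j = P at this
      nlinarith [Nat.zero_le (g 0 * t * P), Nat.zero_le (D * P)]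

theorem Nat.exists_mul_pow_lt_pow {m n : ℕ} (h : m < n) (D N : ℕ) :
    ∃ u, D * (N * u + 1) ^ m < (u + 1) ^ n := by
  refine ⟨D * (N + 1) ^ m, ?_⟩
  set u := D * (N + 1) ^ m
  calc D * (N * u + 1) ^ m ≤ D * ((N + 1) * (u + 1)) ^ m := by gcongr; nlinarith
    _ = u * (u + 1) ^ m := by rw [mul_pow, ← mul_assoc]
    _ < (u + 1) ^ (m + 1) := by rw [pow_succ']; gcongr; omega
    _ ≤ (u + 1) ^ n := Nat.pow_le_pow_right (by omega) h

end Growth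

section HilbertFunction

variable {ι k R : Type*} [Field k] [CommRing R] [Algebra k R] (𝒜 : ι → Submodule k R)

/-- For a homogeneous ideal `I` this is `dim_k (R ⧸ I)_i`. -/
noncomputable def hilbertFunction (I : Ideal R) (i : ι) : ℕ :=
  finrank k (𝒜 i) - finrank k ↥(I.restrictScalars k ⊓ 𝒜 i)

theorem hilbertFunction_bot (i : ι) : hilbertFunction 𝒜 ⊥ i = finrank k (𝒜 i) := by
  rw [hilbertFunction, Submodule.restrictScalars_bot, bot_inf_eq, finrank_bot, Nat.sub_zero]

variable {𝒜}

theorem hilbertFunction_eq_zero_of_le {I : Ideal R} {i : ι} (h : 𝒜 i ≤ I.restrictScalars k) :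
    hilbertFunction 𝒜 I i = 0 := by
  rw [hilbertFunction, inf_eq_right.mpr h, Nat.sub_self]

variable [DecidableEq ι] [AddCancelCommMonoid ι] [GradedAlgebra 𝒜]

theorem restrictScalars_sup_span_singleton_inf_le {I : Ideal R} (hI : I.IsHomogeneous 𝒜)
    {f : R} {e : ι} (hf : f ∈ 𝒜 e) (i : ι) :
    (I ⊔ Ideal.span {f}).restrictScalars k ⊓ 𝒜 (e + i) ≤
      I.restrictScalars k ⊓ 𝒜 (e + i) ⊔ (𝒜 i).map (LinearMap.mulLeft k f) := by
  rintro y ⟨hyI, hy⟩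
  obtain ⟨p, hp, q, hq, rfl⟩ := Submodule.mem_sup.mp hyI
  obtain ⟨r, rfl⟩ := Ideal.mem_span_singleton'.mp hq
  rw [← DirectSum.decompose_of_mem_same 𝒜 hy, DirectSum.decompose_add, DirectSum.add_apply,
    Submodule.coe_add, mul_comm, DirectSum.coe_decompose_mul_add_of_left_mem 𝒜 hf]
  exact Submodule.add_mem_sup ⟨hI _ hp, Submodule.coe_mem _⟩ ⟨_, Submodule.coe_mem _, rfl⟩

variable [∀ i, FiniteDimensional k (𝒜 i)]

/-- The exact sequence `(R ⧸ I)_i → (R ⧸ I)_(e+i) → (R ⧸ (I + (f)))_(e+i) → 0`, the first map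
being multiplication by `f`. -/
theorem hilbertFunction_le_add {I : Ideal R} (hI : I.IsHomogeneous 𝒜) {f : R} {e : ι}
    (hf : f ∈ 𝒜 e) (i : ι) :
    hilbertFunction 𝒜 I (e + i) ≤
      hilbertFunction 𝒜 (I ⊔ Ideal.span {f}) (e + i) + hilbertFunction 𝒜 I i := by
  have hmul : (I.restrictScalars k ⊓ 𝒜 i).map (LinearMap.mulLeft k f) ≤
      I.restrictScalars k ⊓ 𝒜 (e + i) := by
    rintro _ ⟨p, ⟨hpI, hp⟩, rfl⟩
    exact ⟨I.mul_mem_left f hpI, SetLike.GradedMul.mul_mem hf hp⟩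
  have := Submodule.finrank_sup_map_add_finrank_le inf_le_right hmul
  have := Submodule.finrank_mono (restrictScalars_sup_span_singleton_inf_le hI hf i)
  have := Submodule.finrank_mono
    (inf_le_right : (I ⊔ Ideal.span {f}).restrictScalars k ⊓ 𝒜 (e + i) ≤ 𝒜 (e + i))
  have := Submodule.finrank_mono (inf_le_inf_right (𝒜 (e + i))
    (Submodule.restrictScalars_mono k (le_sup_left : I ≤ I ⊔ Ideal.span {f})))
  unfold hilbertFunction
  omega

theorem exists_hilbertFunction_nsmul_le {e : ι} {s : Finset R} (hs : s.Nonempty)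
    (hse : ∀ f ∈ s, f ∈ 𝒜 e) {I : Ideal R} (hI : I.IsHomogeneous 𝒜)
    (h : ∀ᶠ t : ℕ in atTop, hilbertFunction 𝒜 (I ⊔ Ideal.span s) (t • e) = 0) :
    ∃ D, ∀ t, hilbertFunction 𝒜 I (t • e) ≤ D * (t + 1) ^ (s.card - 1) := by
  have step {I : Ideal R} (hI : I.IsHomogeneous 𝒜) {f : R} (hf : f ∈ 𝒜 e) (t : ℕ) :
      hilbertFunction 𝒜 I ((t + 1) • e) ≤
        hilbertFunction 𝒜 (I ⊔ Ideal.span {f}) ((t + 1) • e) + hilbertFunction 𝒜 I (t • e) := by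
    rw [succ_nsmul']
    exact hilbertFunction_le_add hI hf _
  induction hs using Finset.Nonempty.cons_induction generalizing I with
  | singleton f =>
    rw [Finset.coe_singleton] at h
    obtain ⟨D, hD⟩ := exists_le_of_le_add_of_eventually_eq_zero
      (g := fun t => hilbertFunction 𝒜 I (t • e))
      (step hI (hse f (Finset.mem_singleton_self f))) h
    exact ⟨D, by simpa using hD⟩
  | cons f s hfs hs ih =>
    have hf := hse f (Finset.mem_cons_self f s)
    have hIf : (I ⊔ Ideal.span {f}).IsHomogeneous 𝒜 :=
      hI.sup (Ideal.homogeneous_span 𝒜 _ (by simpa using ⟨e, hf⟩))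
    rw [Finset.coe_cons, Ideal.span_insert, ← sup_assoc] at h
    obtain ⟨D, hD⟩ := ih (fun g hg => hse g (Finset.mem_cons_of_mem hg)) hIf h
    rw [Finset.card_cons, Nat.add_sub_cancel, ← Nat.sub_add_cancel hs.card_pos]
    exact ⟨_, le_mul_pow_succ_of_le_add (g := fun t => hilbertFunction 𝒜 I (t • e))
      (step hI hf) hD⟩

end HilbertFunction

section Padding

variable {ρ : Type*} [Fintype ρ] [DecidableEq ρ] (ρ₀ : ρ) (t : ℕ) {u : ℕ}

def padToSum (α : {i // i ≠ ρ₀} → Fin (u + 1)) : ρ → ℕ :=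
  fun i => if h : i = ρ₀ then t - ∑ j, (α j : ℕ) else α ⟨i, h⟩

variable {ρ₀ t}

theorem sum_padToSum (h : (Fintype.card ρ - 1) * u ≤ t) (α : {i // i ≠ ρ₀} → Fin (u + 1)) :
    ∑ i, padToSum ρ₀ t α i = t := by
  have : ∑ j, (α j : ℕ) ≤ t := by
    calc ∑ j, (α j : ℕ) ≤ Fintype.card {i // i ≠ ρ₀} • u :=
          Finset.sum_le_card_nsmul _ _ _ fun j _ => Nat.lt_succ_iff.mp (α j).2
      _ ≤ t := by simpa using h
  have hne (i : {i // i ≠ ρ₀}) : padToSum ρ₀ t α i = α i := dif_neg i.2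
  rw [Fintype.sum_eq_add_sum_subtype_ne _ ρ₀, Finset.sum_congr rfl fun i _ => hne i, padToSum,
    dif_pos rfl]
  omega

theorem padToSum_injective : Function.Injective (padToSum ρ₀ t (u := u)) := by
  intro α β h
  funext i
  exact Fin.ext <| by simpa [padToSum, i.2] using congrFun h i

end Padding

namespace MvPolynomial

variable (σ τ : Type*) (k : Type*) [Field k]

def biWeight : σ ⊕ τ → ℕ × ℕ := Sum.elim (fun _ => (1, 0)) (fun _ => (0, 1))

noncomputable def biIrrelevantIdeal : Ideal (MvPolynomial (σ ⊕ τ) k) :=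
  Ideal.span (Set.range fun ij : σ × τ => X (.inl ij.1) * X (.inr ij.2))

variable {σ τ k}

theorem finrank_weightedHomogeneousSubmodule_biWeight (m : ℕ × ℕ) :
    finrank k (weightedHomogeneousSubmodule k (biWeight σ τ) m) =
      Nat.card {d : σ ⊕ τ →₀ ℕ | Finsupp.weight (biWeight σ τ) d = m} := by
  rw [weightedHomogeneousSubmodule_eq_finsupp_supported]
  exact Module.finrank_eq_nat_card_basis (basisRestrictSupport k _)

variable [Fintype σ] [Fintype τ]

theorem weight_biWeight (d : σ ⊕ τ →₀ ℕ) :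
    Finsupp.weight (biWeight σ τ) d = (∑ i, d (.inl i), ∑ j, d (.inr j)) := by
  rw [Finsupp.weight_eq_sum, Fintype.sum_sum_type]
  ext <;> simp [biWeight, Prod.fst_sum, Prod.snd_sum]

theorem finite_setOf_weight_biWeight_eq (m : ℕ × ℕ) :
    {d : σ ⊕ τ →₀ ℕ | Finsupp.weight (biWeight σ τ) d = m}.Finite := by
  refine (Finsupp.finite_of_degree_le (m.1 + m.2)).subset fun d hd => ?_
  simp only [Set.mem_ofPred_eq, weight_biWeight] at hd
  simp [Finsupp.degree_eq_sum, Fintype.sum_sum_type, ← hd]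

instance (m : ℕ × ℕ) :
    FiniteDimensional k (weightedHomogeneousSubmodule k (biWeight σ τ) m) := by
  rw [weightedHomogeneousSubmodule_eq_finsupp_supported]
  have := (finite_setOf_weight_biWeight_eq (σ := σ) (τ := τ) m).to_subtype
  exact Module.Finite.of_basis (basisRestrictSupport k _)

theorem pow_le_finrank_weightedHomogeneousSubmodule_biWeight (i₀ : σ) (j₀ : τ) {u t : ℕ}
    (hσ : (Fintype.card σ - 1) * u ≤ t) (hτ : (Fintype.card τ - 1) * u ≤ t) :
    (u + 1) ^ ((Fintype.card σ - 1) + (Fintype.card τ - 1)) ≤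
      finrank k (weightedHomogeneousSubmodule k (biWeight σ τ) (t, t)) := by
  classical
  have := (finite_setOf_weight_biWeight_eq (σ := σ) (τ := τ) (t, t)).to_subtype
  let Φ : ({i // i ≠ i₀} → Fin (u + 1)) × ({j // j ≠ j₀} → Fin (u + 1)) →
      {d : σ ⊕ τ →₀ ℕ | Finsupp.weight (biWeight σ τ) d = (t, t)} := fun αβ =>
    ⟨Finsupp.equivFunOnFinite.symm (Sum.elim (padToSum i₀ t αβ.1) (padToSum j₀ t αβ.2)), by
      simp [weight_biWeight, sum_padToSum hσ, sum_padToSum hτ]⟩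
  have hΦ : Function.Injective Φ := fun αβ αβ' h => by
    have h' := congrArg (⇑) (Subtype.ext_iff.mp h)
    simp only [Φ, Finsupp.coe_equivFunOnFinite_symm] at h'
    have hσ' : padToSum i₀ t αβ.1 = padToSum i₀ t αβ'.1 := by
      ext i
      exact congrFun h' (.inl i)
    have hτ' : padToSum j₀ t αβ.2 = padToSum j₀ t αβ'.2 := by
      ext j
      exact congrFun h' (.inr j)
    exact Prod.ext (padToSum_injective hσ') (padToSum_injective hτ')
  rw [finrank_weightedHomogeneousSubmodule_biWeight, pow_add]
  simpa using Nat.card_le_card_of_injective Φ hΦ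

theorem weightedHomogeneousSubmodule_biWeight_le_pow (t : ℕ) :
    weightedHomogeneousSubmodule k (biWeight σ τ) (t, t) ≤
      (biIrrelevantIdeal σ τ k ^ t).restrictScalars k := by
  rw [weightedHomogeneousSubmodule_eq_finsupp_supported]
  change restrictSupport k _ ≤ _
  rw [restrictSupport_eq_span, Submodule.span_le]
  rintro _ ⟨d, hd, rfl⟩
  rw [Set.mem_ofPred_eq] at hd
  induction t generalizing d with
  | zero => simp
  | succ t ih =>
    have hsum := hd
    simp only [weight_biWeight, Prod.mk.injEq] at hsum
    obtain ⟨i, -, hi⟩ := Finset.exists_ne_zero_of_sum_ne_zero (hsum.1.trans_ne t.succ_ne_zero)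
    obtain ⟨j, -, hj⟩ := Finset.exists_ne_zero_of_sum_ne_zero (hsum.2.trans_ne t.succ_ne_zero)
    set d₁ := d - Finsupp.single (.inl i) 1
    have hj₁ : d₁ (.inr j) ≠ 0 := by simpa [d₁] using hj
    set d₂ := d₁ - Finsupp.single (.inr j) 1
    have hd₂ : Finsupp.weight (biWeight σ τ) d₂ = (t, t) := by
      have h : Finsupp.weight (biWeight σ τ) d₂ + (0, 1) + (1, 0) = (t + 1, t + 1) := by
        rw [← Finsupp.weight_sub_single_add hi, ← Finsupp.weight_sub_single_add hj₁] at hd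
        exact hd
      simp only [Prod.ext_iff, Prod.fst_add, Prod.snd_add] at h ⊢
      omega
    have hmonomial : (monomial d 1 : MvPolynomial (σ ⊕ τ) k) =
        monomial d₂ 1 * (X (.inl i) * X (.inr j)) := by
      have hd_eq : d = d₂ + Finsupp.single (.inr j) 1 + Finsupp.single (.inl i) 1 := by
        rw [Finsupp.sub_add_single_one_cancel hj₁, Finsupp.sub_add_single_one_cancel hi]
      conv_lhs => rw [hd_eq, monomial_add_single, monomial_add_single]
      ring
    change monomial d 1 ∈ _
    rw [hmonomial, pow_succ]
    exact Ideal.mul_mem_mul (ih d₂ hd₂) (Ideal.subset_span ⟨(i, j), rfl⟩)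

theorem biIrrelevantIdeal_le_radical [IsAlgClosed k] {I : Ideal (MvPolynomial (σ ⊕ τ) k)}
    (h : ∀ x ∈ zeroLocus k I, x ∘ Sum.inl = 0 ∨ x ∘ Sum.inr = 0) :
    biIrrelevantIdeal σ τ k ≤ I.radical := by
  rw [← vanishingIdeal_zeroLocus_eq_radical (K := k), biIrrelevantIdeal, Ideal.span_le]
  rintro _ ⟨⟨i, j⟩, rfl⟩ x hx
  change eval x (X (Sum.inl i) * X (Sum.inr j)) = 0
  rw [map_mul, eval_X, eval_X, mul_eq_zero]
  exact (h x hx).imp (congrFun · i) (congrFun · j)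

noncomputable def bilinearPoly (M : σ → τ → k) : MvPolynomial (σ ⊕ τ) k :=
  ∑ i, ∑ j, C (M i j) * X (.inl i) * X (.inr j)

theorem bilinearPoly_mem (M : σ → τ → k) :
    bilinearPoly M ∈ weightedHomogeneousSubmodule k (biWeight σ τ) (1, 1) := by
  refine Submodule.sum_mem _ fun i _ => Submodule.sum_mem _ fun j _ => ?_
  simpa [biWeight] using ((isWeightedHomogeneous_C (biWeight σ τ) (M i j)).mul
    (isWeightedHomogeneous_X k _ (.inl i))).mul (isWeightedHomogeneous_X k _ (.inr j))

theorem eval_bilinearPoly (M : σ → τ → k) (x : σ ⊕ τ → k) :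
    eval x (bilinearPoly M) = ∑ i, ∑ j, M i j * x (.inl i) * x (.inr j) := by
  simp [bilinearPoly]

theorem exists_eval_eq_zero_of_biWeight [IsAlgClosed k] [Nonempty σ] [Nonempty τ] {ι : Type*}
    [Fintype ι] (F : ι → MvPolynomial (σ ⊕ τ) k)
    (hF : ∀ l, F l ∈ weightedHomogeneousSubmodule k (biWeight σ τ) (1, 1))
    (hcard : Fintype.card ι + 1 < Fintype.card σ + Fintype.card τ) :
    ∃ x : σ ⊕ τ → k, (∀ l, eval x (F l) = 0) ∧ x ∘ Sum.inl ≠ 0 ∧ x ∘ Sum.inr ≠ 0 := by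
  classical
  let _ := weightedGradedAlgebra k (biWeight σ τ)
  rcases isEmpty_or_nonempty ι with hι | hι
  · exact ⟨1, isEmptyElim, one_ne_zero, one_ne_zero⟩
  by_contra! hno
  set s := Finset.univ.image F
  have hrad : biIrrelevantIdeal σ τ k ≤ (Ideal.span s).radical := by
    refine biIrrelevantIdeal_le_radical fun x hx => or_iff_not_imp_left.mpr (hno x fun l => ?_)
    exact hx _ (Ideal.subset_span (by simp [s]))
  obtain ⟨M, hM⟩ :=
    Ideal.exists_pow_le_of_le_radical_of_fg hrad (Submodule.fg_span (Set.finite_range _))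
  have hvanish : ∀ᶠ t : ℕ in atTop,
      hilbertFunction (weightedHomogeneousSubmodule k (biWeight σ τ)) (⊥ ⊔ Ideal.span s)
        (t • (1, 1)) = 0 := by
    filter_upwards [eventually_ge_atTop M] with t ht
    refine hilbertFunction_eq_zero_of_le ?_
    simpa using (weightedHomogeneousSubmodule_biWeight_le_pow t).trans
      (Submodule.restrictScalars_mono k ((Ideal.pow_le_pow_right ht).trans hM))
  obtain ⟨D, hD⟩ := exists_hilbertFunction_nsmul_le (s := s) (Finset.univ_nonempty.image F)
    (by simpa [s] using hF) (Ideal.IsHomogeneous.bot _) hvanish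
  have hs : s.card ≤ Fintype.card ι := Finset.card_image_le.trans_eq Finset.card_univ
  have := Fintype.card_pos (α := ι)
  have hσ := Fintype.card_pos (α := σ)
  have hτ := Fintype.card_pos (α := τ)
  obtain ⟨u, hu⟩ := Nat.exists_mul_pow_lt_pow
    (show s.card - 1 < (Fintype.card σ - 1) + (Fintype.card τ - 1) by omega)
    D (Fintype.card σ + Fintype.card τ)
  have hlower := pow_le_finrank_weightedHomogeneousSubmodule_biWeight (k := k)
    (Classical.arbitrary σ) (Classical.arbitrary τ) (u := u)
    (t := (Fintype.card σ + Fintype.card τ) * u) (by gcongr; omega) (by gcongr; omega)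
  have hupper := hD ((Fintype.card σ + Fintype.card τ) * u)
  rw [hilbertFunction_bot, Prod.smul_mk, smul_eq_mul, mul_one] at hupper
  omega

end MvPolynomial

open MvPolynomial in
theorem LinearMap.exists_apply_apply_eq_zero {k V W U : Type*} [Field k] [IsAlgClosed k]
    [AddCommGroup V] [Module k V] [AddCommGroup W] [Module k W] [AddCommGroup U] [Module k U]
    [FiniteDimensional k V] [FiniteDimensional k W] [FiniteDimensional k U]
    (B : V →ₗ[k] W →ₗ[k] U) (hV : 0 < finrank k V) (hW : 0 < finrank k W)
    (h : finrank k U + 1 < finrank k V + finrank k W) :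
    ∃ v ≠ 0, ∃ w ≠ 0, B v w = 0 := by
  let bV := Module.finBasis k V
  let bW := Module.finBasis k W
  let bU := Module.finBasis k U
  have := Fin.pos_iff_nonempty.mp hV
  have := Fin.pos_iff_nonempty.mp hW
  obtain ⟨x, hx, hv, hw⟩ := exists_eval_eq_zero_of_biWeight (k := k)
    (fun l => bilinearPoly fun i j => bU.coord l (B (bV i) (bW j))) (fun l => bilinearPoly_mem _)
    (by simpa using h)
  refine ⟨bV.equivFun.symm (x ∘ Sum.inl), (LinearEquiv.map_ne_zero_iff _).mpr hv,
    bW.equivFun.symm (x ∘ Sum.inr), (LinearEquiv.map_ne_zero_iff _).mpr hw, ?_⟩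
  refine bU.forall_coord_eq_zero_iff.mp fun l => ?_
  rw [← hx l]
  simp only [eval_bilinearPoly]
  simp only [Basis.equivFun_symm_apply, Function.comp_apply, map_sum, map_smul, coe_sum,
    coe_smul, Finset.sum_apply, Pi.smul_apply, Basis.coord_apply, smul_eq_mul, Finset.mul_sum,
    mul_left_comm, mul_comm]
  exact Finset.sum_comm

/-- Let `k` be an algebraically closed field, `A` and `C` finite-dimensional `k`-vector
spaces with `dim A = a ≥ 1` and `dim C = a + b - 2` where `b ≥ 2`, and let
`W ⊆ Hom_k(A, C)` be a `k`-linear subspace with `dim W = b`. Then `W` contains a nonzero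
linear map `A → C` that is not injective. -/
theorem linear_subspace_meets_noninjective_locus {k A C : Type*} [Field k] [IsAlgClosed k]
    [AddCommGroup A] [Module k A] [AddCommGroup C] [Module k C]
    [FiniteDimensional k A] [FiniteDimensional k C]
    (a b : ℕ) (ha1 : 1 ≤ a) (hb2 : 2 ≤ b)
    (ha : Module.finrank k A = a) (hc : Module.finrank k C = a + b - 2)
    (W : Submodule k (A →ₗ[k] C)) (hW : Module.finrank k ↥W = b) :
    ∃ f : A →ₗ[k] C, f ∈ W ∧ f ≠ 0 ∧ ¬ Function.Injective f := by
  obtain ⟨f, hf, v, hv, hfv⟩ :=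
    LinearMap.exists_apply_apply_eq_zero W.subtype (by omega) (by omega) (by omega)
  refine ⟨f, f.2, by simpa using hf, fun hinj => hv (hinj ?_)⟩
  simpa using hfv
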